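/- Let j ≥ 0 and let g_0, g_1, …, g_j be real numbers with g_j > g_{j-1} > … > g_0 > 0 (with the convention g_{-1} = 0 when j = 0), and let σ be a real number with g_j/(2 g_j − g_{j-1}) ≤ σ ≤ 1. Then for any real numbers v^0, v^1, …, v^{j+1}, setting Δv = Σ_{s=0}^{j} g_s (v^{s+1} − v^s) and Δ(v²) = Σ_{s=0}^{j} g_s ((v^{s+1})² − (v^s)²), one has (σ v^{j+1} + (1 − σ) v^{j}) · Δv ≥ (1/2) Δ(v²). -/

import Mathlib

/-!
Write `b r = g r - g (r - 1)` (with `g (-1) = 0`); these increments are positive. Abel summation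
turns `Δf` into `∑_{r ≤ j} b r (f (j+1) - f r)`, and with `u r = v (j+1) - v r`, `d = u j` one gets
`2 (σ v (j+1) + (1 - σ) v j) Δv - Δ(v²) = ∑_{r ≤ j} b r (u r ^ 2 - 2 (1 - σ) d u r)`.
Completing the square bounds each term with `r < j` below by `-b r (1 - σ)² d²`; these add up to
`-g (j-1) (1 - σ)² d²`, which the last term `(g j - g (j-1)) (2σ - 1) d²` dominates exactly when
`σ ≥ g j / (2 g j - g (j-1))`.
-/

open Finset

namespace Weights

variable {M : Type*}

/-- `g (n - 1)`, with the convention `g (-1) = 0`. -/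
def prevOrZero [Zero M] (g : ℕ → M) (n : ℕ) : M := if n = 0 then 0 else g (n - 1)

def increment [AddGroup M] (g : ℕ → M) (n : ℕ) : M := g n - prevOrZero g n

theorem sum_range_increment [AddCommGroup M] (g : ℕ → M) (n : ℕ) :
    ∑ r ∈ range n, increment g r = prevOrZero g n := by
  induction n with
  | zero => simp [prevOrZero]
  | succ n ih => rw [sum_range_succ, ih]; simp [increment, prevOrZero]

theorem increment_pos [AddCommGroup M] [PartialOrder M] [IsOrderedAddMonoid M]
    {g : ℕ → M} {j : ℕ} (hg0 : 0 < g 0) (hgmono : ∀ s, s < j → g s < g (s + 1))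
    {r : ℕ} (hr : r ≤ j) : 0 < increment g r := by
  rcases r with _ | r
  · simpa [increment, prevOrZero] using hg0
  · simpa [increment, prevOrZero] using hgmono r hr

/-- Abel summation. -/
theorem sum_mul_sub_eq_sum_increment_mul [CommRing M] (g f : ℕ → M) (n : ℕ) :
    ∑ s ∈ range n, g s * (f (s + 1) - f s) = ∑ r ∈ range n, increment g r * (f n - f r) := by
  induction n with
  | zero => simp
  | succ n ih =>
    have hsplit : ∀ r ∈ range n, increment g r * (f (n + 1) - f r)
        = increment g r * (f n - f r) + increment g r * (f (n + 1) - f n) := fun r _ => by ring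
    rw [sum_range_succ, ih, sum_range_succ, sum_congr rfl hsplit, sum_add_distrib, ← sum_mul,
      sum_range_increment]
    simp only [increment]
    ring

theorem two_mul_sum_sub_sum_sq_eq [CommRing M] (g v : ℕ → M) (σ : M) (n : ℕ) :
    2 * (σ * v (n + 1) + (1 - σ) * v n) * ∑ s ∈ range (n + 1), g s * (v (s + 1) - v s)
        - ∑ s ∈ range (n + 1), g s * (v (s + 1) ^ 2 - v s ^ 2)
      = ∑ r ∈ range (n + 1), increment g r * ((v (n + 1) - v r) ^ 2
          - 2 * ((1 - σ) * (v (n + 1) - v n)) * (v (n + 1) - v r)) := by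
  rw [sum_mul_sub_eq_sum_increment_mul g v, sum_mul_sub_eq_sum_increment_mul g (v · ^ 2),
    mul_sum, ← sum_sub_distrib]
  exact sum_congr rfl fun r _ => by ring

end Weights

theorem neg_mul_sq_le_mul_sq_sub {b : ℝ} (hb : 0 ≤ b) (c u : ℝ) :
    -(b * c ^ 2) ≤ b * (u ^ 2 - 2 * c * u) := by
  nlinarith [mul_nonneg hb (sq_nonneg (u - c))]

theorem sq_one_sub_mul_le_of_div_le {p q σ : ℝ} (hp : 0 ≤ p) (hpq : p < q)
    (hσl : q / (2 * q - p) ≤ σ) (hσu : σ ≤ 1) :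
    (1 - σ) ^ 2 * p ≤ (2 * σ - 1) * (q - p) := by
  have hσq : q ≤ σ * (2 * q - p) := (div_le_iff₀ (by linarith)).1 hσl
  have hσ : 0 ≤ σ := by nlinarith
  -- the difference is `(2σ - 1) q - σ² p ≥ σ p - σ² p`
  nlinarith [mul_nonneg (mul_nonneg hσ hp) (sub_nonneg.2 hσu)]

open Weights in
theorem corollary1 (j : ℕ) (g v : ℕ → ℝ) (σ : ℝ)
    (hg0 : 0 < g 0) (hgmono : ∀ s, s < j → g s < g (s + 1))
    (hσl : g j / (2 * g j - if j = 0 then 0 else g (j - 1)) ≤ σ) (hσu : σ ≤ 1) :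
    (σ * v (j + 1) + (1 - σ) * v j) *
        (∑ s ∈ Finset.range (j + 1), g s * (v (s + 1) - v s)) ≥
      (1 / 2) * (∑ s ∈ Finset.range (j + 1), g s * ((v (s + 1)) ^ 2 - (v s) ^ 2)) := by
  have hinc : ∀ r, r ≤ j → 0 < increment g r := fun r => increment_pos hg0 hgmono
  set d := v (j + 1) - v j
  have hp : 0 ≤ prevOrZero g j := sum_range_increment g j ▸
    sum_nonneg fun r hr => (hinc r (mem_range.1 hr).le).le
  have hpq : prevOrZero g j < g j := sub_pos.1 (hinc j le_rfl)
  have hcoef := sq_one_sub_mul_le_of_div_le hp hpq hσl hσu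
  have hhead : -(prevOrZero g j * ((1 - σ) * d) ^ 2) ≤ ∑ r ∈ range j,
      increment g r * ((v (j + 1) - v r) ^ 2 - 2 * ((1 - σ) * d) * (v (j + 1) - v r)) := by
    rw [← sum_range_increment, sum_mul, ← sum_neg_distrib]
    exact sum_le_sum fun r hr => neg_mul_sq_le_mul_sq_sub (hinc r (mem_range.1 hr).le).le _ _
  have hsplit := two_mul_sum_sub_sum_sq_eq g v σ j
  rw [sum_range_succ (fun r => increment g r * _) j] at hsplit
  have hlast : increment g j * (d ^ 2 - 2 * ((1 - σ) * d) * d)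
      = (2 * σ - 1) * (g j - prevOrZero g j) * d ^ 2 := by
    simp only [increment]; ring
  rw [hlast] at hsplit
  nlinarith [mul_le_mul_of_nonneg_right hcoef (sq_nonneg d)]
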